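/- Let G = (V,E) be a finite undirected simple graph, h a positive integer, v ∈ V, and u ∈ N_v^h(G) with s = dis_G(u,v). Define F_u = {w ∈ N_v^{h-s}(G) : dis_{G(V \ {v})}(u,w) > h}. Then the h-degree of u decreases by exactly 1 + |F_u| when v is deleted: d_u^h(G) − d_u^h(G(V \ {v})) = 1 + |F_u|. -/

import Mathlib

open SimpleGraph

variable {V : Type*} [Fintype V] [DecidableEq V]

/-- The subgraph of `G` induced by the vertex set `S`, viewed as a graph on the
same vertex type (edges are exactly the edges of `G` with both endpoints in `S`). -/
def SimpleGraph.inducedOn (G : SimpleGraph V) (S : Set V) : SimpleGraph V where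
  Adj x y := G.Adj x y ∧ x ∈ S ∧ y ∈ S
  symm := ⟨fun _ _ ⟨ha, hx, hy⟩ => ⟨ha.symm, hy, hx⟩⟩
  loopless := ⟨fun _ ⟨ha, _, _⟩ => G.irrefl ha⟩

/-- The `h`-hop neighborhood of `v` in `G`:
all vertices `u ≠ v` with `dis_G(v,u) ≤ h`. -/
def SimpleGraph.hNbhd (G : SimpleGraph V) (h : ℕ) (v : V) : Set V :=
  {u | u ≠ v ∧ G.edist v u ≤ (h : ℕ∞)}

/-- The `h`-degree of `v` in `G`: the number of vertices in its `h`-hop neighborhood. -/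
noncomputable def SimpleGraph.hDeg (G : SimpleGraph V) (h : ℕ) (v : V) : ℕ :=
  (G.hNbhd h v).ncard

/-!
A vertex of `N_u^h(G)` is lost in `G - v` exactly when deleting `v` pushes its distance from
`u` beyond `h`. Besides `v` itself, for such a vertex `w` every shortest `u`–`w` walk in `G`
passes through `v`, so `dis(u,w) = s + dis(v,w)` and `w ∈ N_v^{h-s}(G)`. Conversely every
`w ∈ N_v^{h-s}(G)` is within `s + (h - s) = h` of `u` in `G`. Thus the lost vertices are
exactly `{v} ∪ F_u`, a disjoint union.
-/

lemma ENat.le_natCast_sub_iff_add_le {s h : ℕ} (hsh : s ≤ h) {e : ℕ∞} :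
    e ≤ ((h - s : ℕ) : ℕ∞) ↔ (s : ℕ∞) + e ≤ h := by
  rw [ENat.natCast_sub, (ENat.addLECancellable_natCast s).le_tsub_iff_left (by exact_mod_cast hsh)]

namespace SimpleGraph

variable {V : Type*} {G H : SimpleGraph V} {S : Set V}

lemma inducedOn_le : G.inducedOn S ≤ G :=
  fun _ _ hxy => hxy.1

lemma edist_inducedOn_eq_top_of_notMem {x y : V} (hy : y ∉ S) (hxy : x ≠ y) :
    (G.inducedOn S).edist x y = ⊤ := by
  refine edist_eq_top_of_not_reachable fun ⟨p⟩ => ?_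
  cases p.reverse with
  | nil => exact hxy rfl
  | cons ha _ => exact hy ha.2.1

lemma edist_inducedOn_le_length {x y : V} (p : G.Walk x y) (hp : ∀ z ∈ p.support, z ∈ S) :
    (G.inducedOn S).edist x y ≤ p.length := by
  have hedges : ∀ e ∈ p.edges, e ∈ (G.inducedOn S).edgeSet := by
    intro e he
    induction e using Sym2.ind with
    | _ a b =>
      exact ⟨p.edges_subset_edgeSet he, hp a (p.fst_mem_support_of_mem_edges he),
        hp b (p.snd_mem_support_of_mem_edges he)⟩
  simpa using edist_le (p.transfer (G.inducedOn S) hedges)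

lemma edist_add_edist_eq_of_edist_lt_edist_inducedOn [DecidableEq V] {u v w : V}
    (hlt : G.edist u w < (G.inducedOn {v}ᶜ).edist u w) :
    G.edist u v + G.edist v w = G.edist u w := by
  obtain ⟨p, hp⟩ := exists_walk_of_edist_ne_top hlt.ne_top
  have hvp : v ∈ p.support := by
    by_contra hvp
    refine (edist_inducedOn_le_length p fun z hz (hzv : z = v) => hvp (hzv ▸ hz)).not_gt ?_
    rwa [hp]
  refine le_antisymm ?_ SimpleGraph.edist_triangle
  rw [← hp, ← p.take_spec hvp, Walk.length_append, Nat.cast_add]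
  exact add_le_add (edist_le _) (edist_le _)

lemma hNbhd_anti (hle : H ≤ G) (h : ℕ) (u : V) : H.hNbhd h u ⊆ G.hNbhd h u :=
  fun _ ⟨hxu, hx⟩ => ⟨hxu, (edist_anti hle).trans hx⟩

lemma hDeg_sub_hDeg_eq_ncard_diff [Finite V] (hle : H ≤ G) (h : ℕ) (u : V) :
    G.hDeg h u - H.hDeg h u = (G.hNbhd h u \ H.hNbhd h u).ncard :=
  (Set.ncard_sdiff (hNbhd_anti hle h u)).symm

lemma hNbhd_diff_hNbhd_inducedOn_compl_singleton [DecidableEq V] {h s : ℕ} {u v : V}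
    (hu : u ∈ G.hNbhd h v) (hs : G.edist u v = s) :
    G.hNbhd h u \ (G.inducedOn {v}ᶜ).hNbhd h u =
      insert v {w ∈ G.hNbhd (h - s) v | (h : ℕ∞) < (G.inducedOn {v}ᶜ).edist u w} := by
  obtain ⟨huv, hvu⟩ := hu
  have hsh : s ≤ h := by
    rw [edist_comm, hs] at hvu
    exact_mod_cast hvu
  ext w
  simp only [hNbhd, Set.mem_sdiff, Set.mem_ofPred_eq, Set.mem_insert_iff, not_and, not_le]
  constructor
  · rintro ⟨⟨hwu, hw⟩, hw'⟩
    have hlt := hw' hwu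
    by_cases hwv : w = v
    · exact .inl hwv
    have hgeo := edist_add_edist_eq_of_edist_lt_edist_inducedOn (hw.trans_lt hlt)
    rw [hs] at hgeo
    exact .inr ⟨⟨hwv, (ENat.le_natCast_sub_iff_add_le hsh).2 (hgeo ▸ hw)⟩, hlt⟩
  · rintro (rfl | ⟨⟨-, hw⟩, hlt⟩)
    · refine ⟨⟨huv.symm, hs.trans_le (Nat.cast_le.2 hsh)⟩, fun _ => ?_⟩
      rw [edist_inducedOn_eq_top_of_notMem (by simp) huv]
      exact ENat.natCast_lt_top h
    · have hwu : w ≠ u := by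
        rintro rfl
        simp at hlt
      refine ⟨⟨hwu, ?_⟩, fun _ => hlt⟩
      calc G.edist u w ≤ G.edist u v + G.edist v w := SimpleGraph.edist_triangle
        _ ≤ h := hs ▸ (ENat.le_natCast_sub_iff_add_le hsh).1 hw

end SimpleGraph

theorem stmt3_general (G : SimpleGraph V) (h : ℕ) (v u : V) (s : ℕ)
    (hu : u ∈ G.hNbhd h v) (hs : G.edist u v = (s : ℕ∞)) :
    G.hDeg h u - (G.inducedOn {v}ᶜ).hDeg h u =
      1 + {w ∈ G.hNbhd (h - s) v | (h : ℕ∞) < (G.inducedOn {v}ᶜ).edist u w}.ncard := by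
  rw [hDeg_sub_hDeg_eq_ncard_diff inducedOn_le, hNbhd_diff_hNbhd_inducedOn_compl_singleton hu hs,
    Set.ncard_insert_of_notMem (fun hv => hv.1.1 rfl), add_comm]

/-- The `h`-degree of `u` decreases by exactly `1 + |F_u|` when `v` is deleted, where
`F_u = {w ∈ N_v^{h-s}(G) : dis_{G(V∖{v})}(u,w) > h}`. -/
theorem stmt3 (G : SimpleGraph V) (h : ℕ) (hpos : 0 < h) (v u : V) (s : ℕ)
    (hu : u ∈ G.hNbhd h v) (hs : G.edist u v = (s : ℕ∞)) :
    G.hDeg h u - (G.inducedOn {v}ᶜ).hDeg h u =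
      1 + {w ∈ G.hNbhd (h - s) v | (h : ℕ∞) < (G.inducedOn {v}ᶜ).edist u w}.ncard :=
  stmt3_general G h v u s hu hs
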